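/- If W is a rich palindrome and U is the shortest factor of W that is not a factor of the word V obtained by deleting the first and last letters of W, then U is a palindrome and is both a prefix and a suffix of W. -/

import Mathlib

open List

variable {α : Type*} [DecidableEq α]

/-- The set of factors (contiguous subwords) of `W`. -/
def factorFinset (W : List α) : Finset (List α) := (W.inits.flatMap List.tails).toFinset

/-- A palindrome is a word equal to its reversal. -/
def Pal (u : List α) : Prop := u.reverse = u

instance : DecidablePred (Pal : List α → Prop) :=
  fun u => inferInstanceAs (Decidable (u.reverse = u))

/-- The set of palindromic factors of `W` (including the empty word). -/
def palFactorFinset (W : List α) : Finset (List α) := (factorFinset W).filter Pal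

/-- Subword complexity: the number of distinct factors of `W` of length `n`. -/
def C (W : List α) (n : ℕ) : ℕ := ((factorFinset W).filter (fun u => u.length = n)).card

/-- Palindromic complexity: number of distinct palindromic factors of `W` of length `n`. -/
def P (W : List α) (n : ℕ) : ℕ := ((palFactorFinset W).filter (fun u => u.length = n)).card

/-- A word is rich if it has exactly `|W| + 1` distinct palindromic factors. -/
def Rich (W : List α) : Prop := (palFactorFinset W).card = W.length + 1

/-- Number of occurrences of `u` as a factor of `W`. -/
def occ (u W : List α) : ℕ := ((List.range (W.length + 1)).filter (fun i => u <+: W.drop i)).length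

/-- `Z` is a complete return to `u` in `W`: a factor of `W` with exactly two
occurrences of `u`, one as a prefix and one as a suffix. -/
def CompleteReturn (u Z W : List α) : Prop := Z <:+: W ∧ u <+: Z ∧ u <:+ Z ∧ occ u Z = 2

/-- `u` is a right special factor of `W`. -/
def RightSpecial (u W : List α) : Prop :=
  ∃ x y : α, x ≠ y ∧ (u ++ [x]) <:+: W ∧ (u ++ [y]) <:+: W

/-- `R_W`: the smallest `p` such that `W` has no right special factor of length `p`. -/
noncomputable def RW (W : List α) : ℕ := sInf {p : ℕ | ∀ u : List α, u.length = p → ¬ RightSpecial u W}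

/-- `K_W`: the length of the shortest suffix of `W` occurring exactly once in `W`. -/
noncomputable def KW (W : List α) : ℕ := sInf {k : ℕ | ∃ u : List α, u <:+ W ∧ u.length = k ∧ occ u W = 1}

/-- A word is trapezoidal if `|W| = R_W + K_W`. -/
def Trapezoidal (W : List α) : Prop := W.length = RW W + KW W

/-- The minimal period of `W`. -/
noncomputable def minPeriod (W : List α) : ℕ :=
  sInf {q : ℕ | 0 < q ∧ ∀ i : ℕ, i + q < W.length → W[i]? = W[i + q]?}

/-- A binary word is balanced if the number of occurrences of a letter in two
factors of equal length differ by at most 1. -/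
def BalancedWord (W : List Bool) : Prop :=
  ∀ u v : List Bool, u <:+: W → v <:+: W → u.length = v.length →
    u.count true ≤ v.count true + 1

/-!
A word `X` has at most `|X| + 1` palindromic factors, since appending a letter creates at most one
new one: a new palindromic factor of `X ++ [a]` is a suffix, and of two new ones the shorter, being
a suffix and hence a prefix of the longer, would already occur in `X`.

As `W` is rich and `V` has at most `|V| + 1 = |W| - 1` palindromic factors, some palindromic
factor `P ≠ W` of `W` is not a factor of `V`. A factor of `W` avoiding `V` is a prefix or a suffix
of `W`, and for the palindrome `P` of the palindrome `W` it is both. By minimality `|U| ≤ |P|`; if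
`U` is a suffix of `W` it is then a suffix of `P`, hence a factor of `W` without its last letter,
and not being a factor of `V` it is a prefix of `W`; symmetrically for prefixes. Finally a word
that is both a prefix and a suffix of a palindrome is a palindrome.
-/

namespace List

variable {β : Type*} {u v P W : List β}

theorem IsPrefix.isPrefix_dropLast_of_ne (h : u <+: v) (hne : u ≠ v) : u <+: v.dropLast := by
  have hlt : u.length < v.length :=
    lt_of_le_of_ne h.length_le fun hl => hne (h.eq_of_length hl)
  exact prefix_of_prefix_length_le h (dropLast_prefix v) (by rw [length_dropLast]; omega)

theorem IsInfix.isPrefix_or_isInfix_tail (h : u <:+: W) : u <+: W ∨ u <:+: W.tail := by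
  obtain ⟨s, t, rfl⟩ := h
  cases s with
  | nil => exact Or.inl ⟨t, rfl⟩
  | cons _ s => exact Or.inr ⟨s, t, rfl⟩

theorem IsInfix.isSuffix_or_isInfix_dropLast (h : u <:+: W) : u <:+ W ∨ u <:+: W.dropLast := by
  simpa using (reverse_infix.2 h).isPrefix_or_isInfix_tail

theorem IsInfix.isPrefix_or_isSuffix_of_not_infix_tail_dropLast (h : u <:+: W)
    (hnu : ¬ u <:+: W.tail.dropLast) : u <+: W ∨ u <:+ W := by
  rcases h.isSuffix_or_isInfix_dropLast with h' | h'
  · exact Or.inr h'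
  rcases h'.isPrefix_or_isInfix_tail with h'' | h''
  · exact Or.inl (h''.trans (dropLast_prefix W))
  · exact absurd (tail_dropLast ▸ h'') hnu

theorem IsSuffix.isPrefix_of_border (hU : u <:+ W) (hnU : ¬ u <:+: W.tail.dropLast)
    (hPpre : P <+: W) (hPsuf : P <:+ W) (hPW : P ≠ W) (hlen : u.length ≤ P.length) :
    u <+: W := by
  have huP : u <:+ P := suffix_of_suffix_length_le hU hPsuf hlen
  have huW' : u <:+: W.dropLast := huP.isInfix.trans (hPpre.isPrefix_dropLast_of_ne hPW).isInfix
  rcases huW'.isPrefix_or_isInfix_tail with h | h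
  · exact h.trans (dropLast_prefix W)
  · exact absurd (tail_dropLast ▸ h) hnU

theorem IsPrefix.isSuffix_of_border (hU : u <+: W) (hnU : ¬ u <:+: W.tail.dropLast)
    (hPpre : P <+: W) (hPsuf : P <:+ W) (hPW : P ≠ W) (hlen : u.length ≤ P.length) :
    u <:+ W := by
  have hnU' : ¬ u.reverse <:+: W.reverse.tail.dropLast := by
    simpa [tail_dropLast] using hnU
  simpa using (reverse_suffix.2 hU).isPrefix_of_border hnU' (reverse_prefix.2 hPsuf)
    (reverse_suffix.2 hPpre) (by simpa using hPW) (by simpa using hlen)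

end List

section Palindromes

variable {β : Type*} {u v W X : List β}

theorem Pal.isPrefix_iff_isSuffix (hu : Pal u) (hW : Pal W) : u <+: W ↔ u <:+ W := by
  rw [← reverse_suffix, hu, hW]

theorem Pal.isPrefix_of_isSuffix (hu : Pal u) (hv : Pal v) (h : u <:+ v) : u <+: v :=
  (hu.isPrefix_iff_isSuffix hv).2 h

theorem Pal.of_isPrefix_of_isSuffix (hW : Pal W) (hp : u <+: W) (hs : u <:+ W) : Pal u := by
  have hrev : u.reverse <:+ W := hW ▸ reverse_suffix.2 hp
  exact (suffix_of_suffix_length_le hrev hs (by simp)).eq_of_length (by simp)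

theorem Pal.eq_of_isSuffix_of_not_infix {a : β} (hu : Pal u) (hv : Pal v) (huv : u <:+ v)
    (hvX : v <:+ X ++ [a]) (hnu : ¬ u <:+: X) : u = v := by
  rcases suffix_concat_iff.1 hvX with rfl | ⟨t, rfl, htX⟩
  · exact suffix_nil.1 huv
  · rcases prefix_concat_iff.1 (hu.isPrefix_of_isSuffix hv huv) with h | h
    · exact h
    · exact absurd (h.isInfix.trans htX.isInfix) hnu

end Palindromes

section PalindromicFactors

variable {u W : List α}

theorem mem_factorFinset : u ∈ factorFinset W ↔ u <:+: W := by
  simp only [factorFinset, mem_toFinset, mem_flatMap, mem_inits, mem_tails]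
  constructor
  · rintro ⟨p, hp, hu⟩
    exact hu.isInfix.trans hp.isInfix
  · rintro ⟨s, t, rfl⟩
    exact ⟨s ++ u, ⟨t, rfl⟩, suffix_append s u⟩

theorem mem_palFactorFinset : u ∈ palFactorFinset W ↔ u <:+: W ∧ Pal u := by
  simp [palFactorFinset, mem_factorFinset]

theorem card_sdiff_palFactorFinset_concat_le_one (X : List α) (a : α) :
    (palFactorFinset (X ++ [a]) \ palFactorFinset X).card ≤ 1 := by
  have hnew : ∀ w ∈ palFactorFinset (X ++ [a]) \ palFactorFinset X,
      w <:+ X ++ [a] ∧ Pal w ∧ ¬ w <:+: X := by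
    intro w hw
    simp only [Finset.mem_sdiff, mem_palFactorFinset, not_and] at hw
    obtain ⟨⟨hwX, hwp⟩, hwn⟩ := hw
    have hwn : ¬ w <:+: X := fun h => hwn h hwp
    exact ⟨infix_concat_iff.1 hwX |>.resolve_right hwn, hwp, hwn⟩
  refine Finset.card_le_one.2 fun u hu v hv => ?_
  obtain ⟨hus, hup, hun⟩ := hnew u hu
  obtain ⟨hvs, hvp, hvn⟩ := hnew v hv
  rcases suffix_or_suffix_of_suffix hus hvs with h | h
  · exact hup.eq_of_isSuffix_of_not_infix hvp h hvs hun
  · exact (hvp.eq_of_isSuffix_of_not_infix hup h hus hvn).symm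

theorem card_palFactorFinset_le (X : List α) : (palFactorFinset X).card ≤ X.length + 1 := by
  induction X using List.reverseRecOn with
  | nil =>
    refine Finset.card_le_one.2 fun u hu v hv => ?_
    rw [mem_palFactorFinset, infix_nil] at hu hv
    rw [hu.1, hv.1]
  | append_singleton X a ih =>
    have := card_sdiff_palFactorFinset_concat_le_one X a
    have := Finset.card_le_card_sdiff_add_card (s := palFactorFinset (X ++ [a]))
      (t := palFactorFinset X)
    simp only [length_append, length_singleton]
    omega

theorem Rich.exists_pal_infix_not_infix_tail_dropLast (hW : Rich W) (h2 : 2 ≤ W.length) :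
    ∃ P, P <:+: W ∧ Pal P ∧ P ≠ W ∧ ¬ P <:+: W.tail.dropLast := by
  by_contra! hall
  have hsub : palFactorFinset W ⊆ insert W (palFactorFinset W.tail.dropLast) := by
    intro P hP
    rw [mem_palFactorFinset] at hP
    rw [Finset.mem_insert, mem_palFactorFinset]
    by_cases hPW : P = W
    · exact Or.inl hPW
    · exact Or.inr ⟨hall P hP.1 hP.2 hPW, hP.2⟩
  have hcard := (Finset.card_le_card hsub).trans (Finset.card_insert_le _ _)
  have hV := card_palFactorFinset_le W.tail.dropLast
  rw [hW] at hcard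
  simp only [length_dropLast, length_tail] at hV
  omega

end PalindromicFactors

theorem stmt10 {α : Type*} [DecidableEq α] (W U : List α) (h2 : 2 ≤ W.length)
    (hpal : Pal W) (hrich : Rich W)
    (hU : U <:+: W) (hnV : ¬ U <:+: W.tail.dropLast)
    (hmin : ∀ u : List α, u <:+: W → ¬ u <:+: W.tail.dropLast → U.length ≤ u.length) :
    Pal U ∧ U <+: W ∧ U <:+ W := by
  obtain ⟨P, hPW, hPpal, hPne, hPV⟩ := hrich.exists_pal_infix_not_infix_tail_dropLast h2
  have hPborder : P <+: W ∧ P <:+ W := by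
    have := hPpal.isPrefix_iff_isSuffix hpal
    rcases hPW.isPrefix_or_isSuffix_of_not_infix_tail_dropLast hPV with h | h
    · exact ⟨h, this.1 h⟩
    · exact ⟨this.2 h, h⟩
  have hlen := hmin P hPW hPV
  have hUborder : U <+: W ∧ U <:+ W := by
    rcases hU.isPrefix_or_isSuffix_of_not_infix_tail_dropLast hnV with h | h
    · exact ⟨h, h.isSuffix_of_border hnV hPborder.1 hPborder.2 hPne hlen⟩
    · exact ⟨h.isPrefix_of_border hnV hPborder.1 hPborder.2 hPne hlen, h⟩
  exact ⟨hpal.of_isPrefix_of_isSuffix hUborder.1 hUborder.2, hUborder⟩
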